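/- arXiv:2004.05227 — 2 statements merged into one kernel-verified Lean document; each statement's English description precedes it below -/
import Mathlib

section
/- Let Λ ⊆ ℕ* with L_Λ(z) = ∑_{m∈Λ} m^{-z} convergent for Re(z) > α > 0, σ > 0, and t ∈ ℝ. Then with F(s) = ∏_{m∈Λ}(1-e^{-sm})^{-1}, for any finite subset S ⊆ Λ one has |F(σ + it)|/F(σ) ≤ ∏_{m∈S} (1 + 4 sin²(mt/2)/(e^{mσ}(1 - e^{-mσ})²))^{-1/2}; in particular |F(σ+it)| ≤ F(σ). -/
/-!
For `x = e^{-mσ}` one has `|1 - x e^{-imt}|² = (1 - x)² + 4x sin²(mt/2) = (1 - x)² (1 + q_m)`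
with `q_m = 4 sin²(mt/2) / (e^{mσ} (1 - x)²)`, so the factors of `|F(σ + it)|` are those of
`F(σ)` multiplied by `(1 + q_m)^{-1/2} ∈ (0, 1]`. Passing to the limit over finite products
containing `S`, the factors outside `S` can only decrease the product.
-/

theorem multipliable_inv_one_sub {ι 𝕜 : Type*} [NormedField 𝕜] [CompleteSpace 𝕜] {w : ι → 𝕜}
    {ρ : ℝ} (hρ : ρ < 1) (hwρ : ∀ i, ‖w i‖ ≤ ρ) (hw : Summable fun i ↦ ‖w i‖) :
    Multipliable fun i ↦ (1 - w i)⁻¹ := by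
  have hgap : ∀ i, 1 - ρ ≤ ‖1 - w i‖ := fun i ↦ by
    linarith [hwρ i, norm_sub_norm_le (1 : 𝕜) (w i), norm_one (α := 𝕜)]
  have hne : ∀ i, 1 - w i ≠ 0 := fun i ↦ norm_pos_iff.mp (by linarith [hgap i])
  refine (multipliable_one_add_of_summable (f := fun i ↦ w i * (1 - w i)⁻¹) <|
    (hw.mul_right (1 - ρ)⁻¹).of_nonneg_of_le (fun _ ↦ norm_nonneg _) fun i ↦ ?_).congr
    fun i ↦ ?_
  · rw [norm_mul, norm_inv]
    gcongr
    exact hgap i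
  · field_simp [hne i]
    ring

theorem Real.one_le_of_hasProd {ι : Type*} {f : ι → ℝ} {a : ℝ} (hf : HasProd f a)
    (h : ∀ i, 1 ≤ f i) : 1 ≤ a :=
  ge_of_tendsto' hf fun _ ↦ Finset.one_le_prod fun i _ ↦ h i

theorem HasProd.le_prod_mul {ι : Type*} {f g b : ι → ℝ} {a c : ℝ} (hf : HasProd f a)
    (hb : HasProd b c) (hfgb : ∀ i, f i = g i * b i) (hg₀ : ∀ i, 0 ≤ g i) (hg₁ : ∀ i, g i ≤ 1)
    (hb₀ : ∀ i, 0 ≤ b i) (s : Finset ι) : a ≤ (∏ i ∈ s, g i) * c := by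
  refine le_of_tendsto_of_tendsto hf (hb.const_mul _) <|
    (Filter.eventually_ge_atTop s).mono fun u hsu ↦ ?_
  simp only [hfgb, Finset.prod_mul_distrib]
  exact mul_le_mul_of_nonneg_right (Finset.prod_anti_set_of_le_one hg₀ hg₁ hsu)
    (Finset.prod_nonneg fun i _ ↦ hb₀ i)

theorem exp_neg_mul_nat_lt_one {σ : ℝ} (hσ : 0 < σ) {m : ℕ} (hm : 0 < m) :
    Real.exp (-σ * m) < 1 :=
  Real.exp_lt_one_iff.mpr <| mul_neg_of_neg_of_pos (neg_neg_of_pos hσ) (Nat.cast_pos.mpr hm)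

theorem multipliable_inv_one_sub_of_norm_eq_exp {𝕜 : Type*} [NormedField 𝕜] [CompleteSpace 𝕜]
    {Λ : Set ℕ} (hΛ : ∀ m ∈ Λ, 0 < m) {σ : ℝ} (hσ : 0 < σ) {w : ℕ → 𝕜}
    (hw : ∀ m, ‖w m‖ = Real.exp (-σ * m)) :
    Multipliable fun m : Λ ↦ (1 - w m)⁻¹ := by
  have hsum : Summable fun n : ℕ ↦ ‖w n‖ := by
    simpa only [hw, mul_comm] using Real.summable_exp_nat_mul_iff.mpr (neg_neg_of_pos hσ)
  refine multipliable_inv_one_sub (exp_neg_mul_nat_lt_one hσ one_pos) (fun m ↦ ?_) (hsum.subtype Λ)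
  have : (1 : ℝ) ≤ (m : ℕ) := by exact_mod_cast hΛ m m.2
  rw [hw, Nat.cast_one, mul_one]
  gcongr
  nlinarith

theorem Complex.norm_one_sub_exp_sq (x θ : ℝ) :
    ‖1 - exp (x + θ * I)‖ ^ 2 = (1 - Real.exp x) ^ 2 + 4 * Real.exp x * Real.sin (θ / 2) ^ 2 := by
  have hcos : Real.cos θ = 1 - 2 * Real.sin (θ / 2) ^ 2 := by
    rw [← Real.cos_two_mul_eq_one_sub, mul_div_cancel₀ _ two_ne_zero]
  rw [Complex.sq_norm, normSq_apply]
  simp only [sub_re, sub_im, one_re, one_im, exp_re, exp_im, add_re, add_im, ofReal_re,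
    ofReal_im, mul_re, mul_im, I_re, I_im, mul_zero, mul_one, sub_self, add_zero, zero_add,
    zero_sub, mul_neg, neg_mul, neg_neg]
  linear_combination (Real.exp x) ^ 2 * Real.sin_sq_add_cos_sq θ - 2 * Real.exp x * hcos

noncomputable def oscillationFactor (σ t : ℝ) (m : ℕ) : ℝ :=
  (1 + 4 * Real.sin ((m : ℝ) * t / 2) ^ 2 /
    (Real.exp ((m : ℝ) * σ) * (1 - Real.exp (-(m : ℝ) * σ)) ^ 2)) ^ (-(1 : ℝ) / 2)

theorem oscillationFactor_nonneg (σ t : ℝ) (m : ℕ) : 0 ≤ oscillationFactor σ t m := by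
  unfold oscillationFactor; positivity

theorem oscillationFactor_le_one (σ t : ℝ) (m : ℕ) : oscillationFactor σ t m ≤ 1 :=
  Real.rpow_le_one_of_one_le_of_nonpos (le_add_of_nonneg_right (by positivity)) (by norm_num)

open Complex in
theorem norm_inv_one_sub_exp_mul_nat {σ : ℝ} (hσ : 0 < σ) (t : ℝ) {m : ℕ} (hm : 0 < m) :
    ‖(1 - exp (-(σ + t * I) * m))⁻¹‖ = oscillationFactor σ t m * (1 - Real.exp (-σ * m))⁻¹ := by
  set x := Real.exp (-σ * m) with hx_def
  set q := 4 * Real.sin ((m : ℝ) * t / 2) ^ 2 / (Real.exp ((m : ℝ) * σ) * (1 - x) ^ 2)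
  have hx₀ : 0 < 1 - x := sub_pos.mpr (exp_neg_mul_nat_lt_one hσ hm)
  have hq : 0 ≤ q := by positivity
  have hqx : (1 - x) ^ 2 * q = 4 * x * Real.sin ((m : ℝ) * t / 2) ^ 2 := by
    have hexp : Real.exp ((m : ℝ) * σ) * x = 1 := by
      rw [← Real.exp_add]; ring_nf; exact Real.exp_zero
    simp only [q]
    field_simp
    linear_combination -Real.sin ((m : ℝ) * t / 2) ^ 2 * hexp
  have hnorm : ‖1 - exp (-(σ + t * I) * m)‖ = (1 - x) * √(1 + q) := by
    have harg : -(σ + t * I) * m = ((-σ * m : ℝ) : ℂ) + ((-(m * t) : ℝ) : ℂ) * I := by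
      push_cast; ring
    rw [← pow_left_inj₀ (norm_nonneg _) (by positivity) two_ne_zero, harg, norm_one_sub_exp_sq,
      ← hx_def, mul_pow, Real.sq_sqrt (by linarith), neg_div, Real.sin_neg, neg_sq, mul_add,
      hqx]
    ring
  have hfactor : oscillationFactor σ t m = (1 + q) ^ (-(1 / 2 : ℝ)) := by
    rw [oscillationFactor, show -(m : ℝ) * σ = -σ * m by ring, neg_div]
  rw [norm_inv, hnorm, mul_inv, mul_comm, hfactor, Real.sqrt_eq_rpow, Real.rpow_neg (by linarith)]

theorem generating_function_ratio_bound_general (Λ : Set ℕ) (hΛ : ∀ m ∈ Λ, 0 < m)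
    (σ : ℝ) (hσ : 0 < σ) (t : ℝ)
    (F : ℂ → ℂ) (hF : ∀ s : ℂ, F s = ∏' m : Λ, (1 - Complex.exp (-s * (m : ℕ)))⁻¹)
    (Fr : ℝ → ℝ) (hFr : ∀ x : ℝ, Fr x = ∏' m : Λ, (1 - Real.exp (-x * (m : ℕ)))⁻¹) :
    (∀ S : Finset ℕ, (S : Set ℕ) ⊆ Λ →
      ‖F (σ + t * Complex.I)‖ / Fr σ ≤
        ∏ m ∈ S, (1 + 4 * Real.sin ((m : ℝ) * t / 2) ^ 2 /
            (Real.exp ((m : ℝ) * σ) * (1 - Real.exp (-(m : ℝ) * σ)) ^ 2)) ^ (-(1 : ℝ) / 2)) ∧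
    ‖F (σ + t * Complex.I)‖ ≤ Fr σ := by
  have hgap : ∀ m : Λ, 0 < 1 - Real.exp (-σ * m) := fun m ↦
    sub_pos.mpr (exp_neg_mul_nat_lt_one hσ (hΛ m m.2))
  have hF_prod : HasProd (fun m : Λ ↦ (1 - Complex.exp (-(σ + t * Complex.I) * m))⁻¹)
      (F (σ + t * Complex.I)) := by
    rw [hF]
    exact (multipliable_inv_one_sub_of_norm_eq_exp hΛ hσ
      (w := fun n ↦ Complex.exp (-(σ + t * Complex.I) * n)) fun m ↦ by
        simp [Complex.norm_exp]).hasProd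
  have hFr_prod : HasProd (fun m : Λ ↦ (1 - Real.exp (-σ * m))⁻¹) (Fr σ) := by
    rw [hFr]
    exact (multipliable_inv_one_sub_of_norm_eq_exp hΛ hσ (w := fun n ↦ Real.exp (-σ * n))
      fun m ↦ Real.norm_of_nonneg (Real.exp_nonneg _)).hasProd
  have hFr_one : 1 ≤ Fr σ := Real.one_le_of_hasProd hFr_prod fun m ↦
    (one_le_inv₀ (hgap m)).mpr (by linarith [Real.exp_pos (-σ * m)])
  have key : ∀ S : Finset ℕ, (S : Set ℕ) ⊆ Λ →
      ‖F (σ + t * Complex.I)‖ ≤ (∏ m ∈ S, oscillationFactor σ t m) * Fr σ := fun S hS ↦ by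
    classical
    rw [← Finset.prod_subtype_of_mem _ hS]
    exact hF_prod.norm.le_prod_mul hFr_prod
      (fun m ↦ norm_inv_one_sub_exp_mul_nat hσ t (hΛ m m.2)) (fun _ ↦ oscillationFactor_nonneg ..)
      (fun _ ↦ oscillationFactor_le_one ..) (fun m ↦ (inv_pos.mpr (hgap m)).le) _
  refine ⟨fun S hS ↦ (div_le_iff₀ (by linarith)).mpr (key S hS), ?_⟩
  simpa using key ∅ (by simp)

theorem generating_function_ratio_bound (Λ : Set ℕ) (hΛ : ∀ m ∈ Λ, 0 < m)
    (α : ℝ) (hα : 0 < α) (hL : Summable fun m : Λ => ((m : ℕ) : ℝ) ^ (-α))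
    (σ : ℝ) (hσ : 0 < σ) (t : ℝ)
    (F : ℂ → ℂ) (hF : ∀ s : ℂ, F s = ∏' m : Λ, (1 - Complex.exp (-s * (m : ℕ)))⁻¹)
    (Fr : ℝ → ℝ) (hFr : ∀ x : ℝ, Fr x = ∏' m : Λ, (1 - Real.exp (-x * (m : ℕ)))⁻¹) :
    (∀ S : Finset ℕ, (S : Set ℕ) ⊆ Λ →
      ‖F (σ + t * Complex.I)‖ / Fr σ ≤
        ∏ m ∈ S, (1 + 4 * Real.sin ((m : ℝ) * t / 2) ^ 2 /
            (Real.exp ((m : ℝ) * σ) * (1 - Real.exp (-(m : ℝ) * σ)) ^ 2)) ^ (-(1 : ℝ) / 2)) ∧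
    ‖F (σ + t * Complex.I)‖ ≤ Fr σ :=
  generating_function_ratio_bound_general Λ hΛ σ hσ t F hF Fr hFr
end

section
/- Let Λ ⊆ ℕ* and suppose for some σ > 0 that every m ∈ Λ with m ≤ 1/(2σ) satisfies ‖mt/2π‖ = mt/2π. Then for 0 < t ≤ 2πσ and T := |Λ ∩ [1, 1/(2σ)]|, with F(s) = ∏_{m∈Λ}(1-e^{-sm})^{-1}, one has |F(σ+it)|/F(σ) ≤ (1 + (t/(2πσ))²/5)^{-T/2}. -/
section AuxSmallT


open Real

lemma exp_half_lt_two : Real.exp (1/2) < 2 := by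
  have hh : Real.exp (1/2) * Real.exp (1/2) = Real.exp 1 := by
    rw [← Real.exp_add]; norm_num
  nlinarith [Real.exp_one_lt_d9, Real.exp_pos (1/2 : ℝ)]

lemma key_ineq {σ t m : ℝ} (hσ : 0 < σ) (ht : 0 < t) (ht' : t ≤ 2 * π * σ)
    (hm : 1 ≤ m) (hm' : m ≤ 1 / (2 * σ)) :
    (1 + (t / (2 * π * σ)) ^ 2 / 5) * (1 - Real.exp (-σ * m)) ^ 2 ≤
      (1 - Real.exp (-σ * m)) ^ 2 + 2 * Real.exp (-σ * m) * (1 - Real.cos (t * m)) := by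
  have hπ := Real.pi_pos
  have hm0 : 0 < m := lt_of_lt_of_le one_pos hm
  have hy2 : σ * m ≤ 1/2 := by
    have h := mul_le_mul_of_nonneg_left hm' (le_of_lt hσ)
    rw [mul_one_div] at h
    calc σ * m ≤ σ / (2 * σ) := h
    _ = 1/2 := by field_simp
  have hθπ : t * m ≤ π := by
    calc t * m ≤ (2 * π * σ) * m := by nlinarith
    _ = 2 * π * (σ * m) := by ring
    _ ≤ 2 * π * (1/2) := by nlinarith
    _ = π := by ring
  have hθ0 : 0 < t * m := mul_pos ht hm0
  have hcos : Real.cos (t * m) ≤ 1 - 2/π^2 * (t*m)^2 :=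
    Real.cos_le_one_sub_mul_cos_sq (by rw [abs_of_nonneg hθ0.le]; exact hθπ)
  have hc : (1:ℝ)/2 ≤ Real.exp (-σ * m) := by
    have h1 : Real.exp (-σ * m) = (Real.exp (σ * m))⁻¹ := by
      rw [← Real.exp_neg]; ring_nf
    have h2 : Real.exp (σ * m) ≤ Real.exp (1/2) := Real.exp_le_exp.2 hy2
    rw [h1]
    have := exp_half_lt_two
    have h3 : Real.exp (σ*m) < 2 := lt_of_le_of_lt h2 this
    rw [le_inv_comm₀] <;> [skip; exact one_half_pos; exact Real.exp_pos _]
    · linarith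
  have h1c : 1 - Real.exp (-σ * m) ≤ σ * m := by
    have := Real.add_one_le_exp (-σ * m)
    linarith
  have h1cpos : 0 ≤ 1 - Real.exp (-σ * m) := by
    have : Real.exp (-σ * m) ≤ 1 := Real.exp_le_one_iff.mpr (by nlinarith)
    linarith
  -- reduce to (t/(2πσ))^2/5 * (1-c)^2 ≤ 2 c (1 - cos θ)
  have e1 : (t / (2 * π * σ)) ^ 2 / 5 * (1 - Real.exp (-σ * m)) ^ 2 ≤
      (t / (2 * π * σ)) ^ 2 / 5 * (σ * m) ^ 2 := by
    apply mul_le_mul_of_nonneg_left _ (by positivity)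
    exact pow_le_pow_left₀ h1cpos h1c 2
  have e2 : (t / (2 * π * σ)) ^ 2 / 5 * (σ * m) ^ 2 = t^2 * m^2 / (20 * π^2) := by
    field_simp
    ring
  have e3 : t^2*m^2/(20*π^2) ≤ 2 * Real.exp (-σ*m) * (2/π^2 * (t*m)^2) := by
    have : 2 * Real.exp (-σ*m) * (2/π^2 * (t*m)^2) = 4 * Real.exp (-σ*m) * (t*m)^2 / π^2 := by
      ring
    rw [this]
    rw [div_le_div_iff₀ (by positivity) (by positivity)]
    have hX : t ^ 2 * m ^ 2 * π ^ 2 = (t*m)^2 * π^2 := by ring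
    have hY : 4 * Real.exp (-σ*m) * (t*m)^2 * (20*π^2) = 80 * Real.exp (-σ*m) * ((t*m)^2 * π^2) := by ring
    rw [hX, hY]
    nlinarith [hc, mul_nonneg (sq_nonneg (t*m)) (sq_nonneg π)]
  have e4 : 2 * Real.exp (-σ*m) * (2/π^2 * (t*m)^2) ≤ 2 * Real.exp (-σ*m) * (1 - Real.cos (t*m)) := by
    apply mul_le_mul_of_nonneg_left _ (by positivity)
    linarith
  nlinarith [e1, e2, e3, e4]

open Real

lemma abs_sq_factor (σ t : ℝ) (m : ℕ) :
    ‖1 - Complex.exp (-(↑σ + ↑t * Complex.I) * (m : ℕ))‖ ^ 2 =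
      (1 - Real.exp (-σ * m)) ^ 2 + 2 * Real.exp (-σ * m) * (1 - Real.cos (t * m)) := by
  have hz : (-(↑σ + ↑t * Complex.I) * (m : ℕ) : ℂ) = ↑(-(σ * m)) + ↑(-(t * m)) * Complex.I := by
    push_cast; ring
  rw [hz, Complex.sq_norm, Complex.normSq_apply]
  simp [Complex.exp_re, Complex.exp_im]
  have hsc := Real.sin_sq_add_cos_sq (t * m)
  linear_combination (Real.exp (-(σ * (m:ℝ)))) ^ 2 * hsc


end AuxSmallT

theorem small_t_ratio_bound (Λ : Set ℕ) (hΛ : ∀ m ∈ Λ, 0 < m)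
    (σ t : ℝ) (hσ : 0 < σ) (ht : 0 < t) (ht' : t ≤ 2 * Real.pi * σ)
    (T : ℕ) (hT : T = Nat.card {m : ℕ // m ∈ Λ ∧ 1 ≤ m ∧ (m : ℝ) ≤ 1 / (2 * σ)})
    (F : ℂ → ℂ) (hF : ∀ s : ℂ, F s = ∏' m : Λ, (1 - Complex.exp (-s * (m : ℕ)))⁻¹)
    (Fr : ℝ → ℝ) (hFr : ∀ x : ℝ, Fr x = ∏' m : Λ, (1 - Real.exp (-x * (m : ℕ)))⁻¹) :
    ‖F (σ + t * Complex.I)‖ / Fr σ ≤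
      (1 + (t / (2 * Real.pi * σ)) ^ 2 / 5) ^ (-(T : ℝ) / 2) := by
  have hπ := Real.pi_pos
  set s : ℂ := ↑σ + ↑t * Complex.I with hs
  set K : ℝ := 1 + (t / (2 * Real.pi * σ)) ^ 2 / 5 with hKdef
  have hK1 : (1:ℝ) ≤ K := by
    rw [hKdef]
    nlinarith [sq_nonneg (t / (2 * Real.pi * σ))]
  have hK0 : (0:ℝ) < K := lt_of_lt_of_le one_pos hK1
  have hsqrtK1 : 1 ≤ Real.sqrt K := by
    have := Real.sqrt_le_sqrt hK1
    simpa using this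
  have hsqrtK0 : 0 < Real.sqrt K := lt_of_lt_of_le one_pos hsqrtK1
  set q : ℝ := (Real.sqrt K)⁻¹ with hqdef
  have hq0 : 0 < q := inv_pos.mpr hsqrtK0
  -- basic notation
  set c : Λ → ℝ := fun i => Real.exp (-σ * (i : ℕ)) with hcdef
  set u : Λ → ℂ := fun i => 1 - Complex.exp (-s * (i : ℕ)) with hudef
  set v : Λ → ℝ := fun i => 1 - Real.exp (-σ * (i : ℕ)) with hvdef
  set r : ℝ := Real.exp (-σ) with hrdef
  have hr1 : r < 1 := Real.exp_lt_one_iff.mpr (by linarith)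
  have hr0 : 0 < r := Real.exp_pos _
  have hm1R : ∀ i : Λ, (1:ℝ) ≤ (i : ℕ) := by
    intro i
    exact_mod_cast hΛ i.1 i.2
  have hcle : ∀ i : Λ, c i ≤ r := by
    intro i
    apply Real.exp_le_exp.mpr
    nlinarith [hm1R i]
  have hc0 : ∀ i : Λ, 0 < c i := fun i => Real.exp_pos _
  have hv0 : ∀ i : Λ, 0 < v i := by
    intro i
    have := hcle i
    simp only [hvdef]
    have : Real.exp (-σ * (i:ℕ)) < 1 := lt_of_le_of_lt (hcle i) hr1
    linarith
  have hvge : ∀ i : Λ, 1 - r ≤ v i := by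
    intro i
    have := hcle i
    simp only [hvdef]
    linarith [hcle i]
  -- summability of c
  have hsc : Summable c := by
    have hgeo : Summable (fun m : ℕ => r ^ m) := summable_geometric_of_lt_one hr0.le hr1
    apply (hgeo.subtype Λ).congr
    intro i
    show r ^ i.1 = c i
    rw [hcdef, hrdef, ← Real.exp_nat_mul]
    congr 1
    ring
  -- modulus facts
  have habs_sq : ∀ i : Λ, (‖u i‖) ^ 2
      = (v i) ^ 2 + 2 * (c i) * (1 - Real.cos (t * (i:ℕ))) := by
    intro i
    exact abs_sq_factor σ t (i : ℕ)
  have hvle : ∀ i : Λ, v i ≤ ‖u i‖ := by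
    intro i
    nlinarith [habs_sq i, Real.cos_le_one (t * (i:ℕ)), hc0 i, (hv0 i).le,
      norm_nonneg (u i)]
  have huabs0 : ∀ i : Λ, 0 < ‖u i‖ := fun i => lt_of_lt_of_le (hv0 i) (hvle i)
  have hu0 : ∀ i : Λ, u i ≠ 0 := by
    intro i h
    have := huabs0 i
    rw [h] at this
    simp at this
  have hre : ∀ i : Λ, (-s * ((i:ℕ) : ℂ)).re = -σ * (i:ℕ) := by
    intro i
    simp [hs, Complex.mul_re]
  have huabs_le : ∀ i : Λ, ‖u i‖ ≤ 1 + c i := by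
    intro i
    calc ‖u i‖ = ‖(1:ℂ) - Complex.exp (-s * (i:ℕ))‖ := rfl
    _ ≤ ‖(1:ℂ)‖ + ‖Complex.exp (-s * (i:ℕ))‖ := norm_sub_le _ _
    _ = 1 + c i := by rw [norm_one, Complex.norm_exp, hre i]
  -- complex log summability and multipliability
  have hnorme : ∀ i : Λ, ‖-(Complex.exp (-s * (i:ℕ)))‖ = c i := by
    intro i
    rw [norm_neg, Complex.norm_exp, hre i]
  have hlogu : Summable fun i : Λ => Complex.log ((u i)⁻¹) := by
    apply Summable.of_norm_bounded (hsc.mul_left ((1 - r)⁻¹ / 2 + 1))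
    intro i
    have hlinv : ‖Complex.log ((u i)⁻¹)‖ = ‖Complex.log (u i)‖ := by
      rw [Complex.log_inv_eq_ite]
      split
      · rw [norm_neg, Complex.norm_conj]
      · rw [norm_neg]
    rw [hlinv]
    have hrw : u i = 1 + -(Complex.exp (-s * (i:ℕ))) := by rw [hudef]; ring
    rw [hrw]
    have hz1 : ‖-(Complex.exp (-s * (i:ℕ)))‖ < 1 := by
      rw [hnorme i]; exact lt_of_le_of_lt (hcle i) hr1
    refine le_trans (Complex.norm_log_one_add_le hz1) ?_
    rw [hnorme i]
    have h1 : c i ^ 2 ≤ c i := by nlinarith [hc0 i, hcle i, hr1]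
    have h2 : (1 - c i)⁻¹ ≤ (1 - r)⁻¹ := by
      apply inv_anti₀ (by linarith)
      linarith [hcle i]
    have h3 : c i ^ 2 * (1 - c i)⁻¹ / 2 ≤ c i * (1 - r)⁻¹ / 2 := by
      have := mul_le_mul h1 h2 (inv_nonneg.mpr (by linarith [hcle i])) (hc0 i).le
      linarith
    calc c i ^ 2 * (1 - c i)⁻¹ / 2 + c i ≤ c i * (1 - r)⁻¹ / 2 + c i := by linarith
    _ = ((1 - r)⁻¹ / 2 + 1) * c i := by ring
  have hmulu : Multipliable fun i : Λ => (u i)⁻¹ :=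
    Complex.multipliable_of_summable_log hlogu
  have hFabs : ‖F s‖ = ∏' i : Λ, (‖u i‖)⁻¹ := by
    rw [hF s, hmulu.norm_tprod]
    congr 1
    funext i
    rw [norm_inv]
  -- real log bounds
  have hloguabs_bound : ∀ i : Λ, |Real.log (‖u i‖)| ≤ (1 - r)⁻¹ * c i := by
    intro i
    have h1r : (0:ℝ) < 1 - r := by linarith
    have hub : Real.log (‖u i‖) ≤ c i := by
      calc Real.log (‖u i‖) ≤ ‖u i‖ - 1 :=
            Real.log_le_sub_one_of_pos (huabs0 i)
      _ ≤ c i := by linarith [huabs_le i]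
    have hlb : -((1 - r)⁻¹ * c i) ≤ Real.log (‖u i‖) := by
      have hlogv : Real.log (v i) ≤ Real.log (‖u i‖) :=
        Real.log_le_log (hv0 i) (hvle i)
      have hvinv : Real.log ((v i)⁻¹) ≤ (v i)⁻¹ - 1 :=
        Real.log_le_sub_one_of_pos (inv_pos.mpr (hv0 i))
      have heq : (v i)⁻¹ - 1 = c i / v i := by
        have hvne : v i ≠ 0 := ne_of_gt (hv0 i)
        have hcv : c i = 1 - v i := by simp only [hcdef, hvdef]; ring
        rw [hcv]
        field_simp
      have hq2 : c i / v i ≤ c i / (1 - r) := by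
        apply div_le_div_of_nonneg_left (hc0 i).le h1r (hvge i)
      rw [Real.log_inv] at hvinv
      rw [heq] at hvinv
      have : -(c i / (1 - r)) ≤ Real.log (v i) := by linarith
      rw [div_eq_inv_mul] at this
      linarith
    rw [abs_le]
    constructor
    · exact hlb
    · calc Real.log (‖u i‖) ≤ c i := hub
      _ ≤ (1 - r)⁻¹ * c i := by
          nlinarith [hc0 i, inv_anti₀ (by linarith : (0:ℝ) < 1 - r) (by linarith : 1 - r ≤ 1)]
  have hlogA : Summable fun i : Λ => Real.log ((‖u i‖)⁻¹) := by
    apply Summable.of_norm_bounded (hsc.mul_left ((1 - r)⁻¹))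
    intro i
    rw [Real.norm_eq_abs, Real.log_inv, abs_neg]
    exact hloguabs_bound i
  have hlogg : Summable fun i : Λ => Real.log ((v i)⁻¹) := by
    apply Summable.of_norm_bounded (hsc.mul_left ((1 - r)⁻¹))
    intro i
    have h1r : (0:ℝ) < 1 - r := by linarith
    rw [Real.norm_eq_abs, abs_of_nonneg (Real.log_nonneg ?pos)]
    case pos =>
      rw [le_inv_comm₀ one_pos (hv0 i)]
      simp only [inv_one]
      simp only [hvdef]
      linarith [hc0 i]
    have hvinv : Real.log ((v i)⁻¹) ≤ (v i)⁻¹ - 1 :=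
      Real.log_le_sub_one_of_pos (inv_pos.mpr (hv0 i))
    have heq : (v i)⁻¹ - 1 = c i / v i := by
      have hvne : v i ≠ 0 := ne_of_gt (hv0 i)
      have hcv : c i = 1 - v i := by simp only [hcdef, hvdef]; ring
      rw [hcv]
      field_simp
    have hq2 : c i / v i ≤ c i / (1 - r) := by
      apply div_le_div_of_nonneg_left (hc0 i).le h1r (hvge i)
    rw [heq] at hvinv
    have hcomm : c i / (1 - r) = (1 - r)⁻¹ * c i := by ring
    linarith
  -- products as exponentials
  have hprodA : ∏' i : Λ, (‖u i‖)⁻¹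
      = Real.exp (∑' i : Λ, Real.log ((‖u i‖)⁻¹)) := by
    have := Real.rexp_tsum_eq_tprod (f := fun i => (‖u i‖)⁻¹)
      (fun i => inv_pos.mpr (huabs0 i)) hlogA
    exact this.symm
  have hprodg : Fr σ = Real.exp (∑' i : Λ, Real.log ((v i)⁻¹)) := by
    rw [hFr σ]
    have := Real.rexp_tsum_eq_tprod (f := fun i => (v i)⁻¹)
      (fun i => inv_pos.mpr (hv0 i)) hlogg
    exact this.symm
  -- the finite set of small indices
  set S : Set ℕ := {m : ℕ | m ∈ Λ ∧ 1 ≤ m ∧ (m : ℝ) ≤ 1 / (2 * σ)} with hSdef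
  have hfinS : S.Finite := by
    apply Set.Finite.subset (Set.finite_Iic ⌈1 / (2 * σ)⌉₊)
    intro m hm
    simp only [Set.mem_Iic]
    have : (m : ℝ) ≤ (⌈1 / (2 * σ)⌉₊ : ℝ) := le_trans hm.2.2 (Nat.le_ceil _)
    exact_mod_cast this
  set G : Set ↥Λ := {i : ↥Λ | ((i : ℕ) : ℝ) ≤ 1 / (2 * σ)} with hGdef
  have hGpre : G = Subtype.val ⁻¹' S := by
    ext i
    simp only [hGdef, hSdef, Set.mem_setOf_eq, Set.mem_preimage]
    constructor
    · intro h
      exact ⟨i.2, hΛ i.1 i.2, h⟩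
    · intro h
      exact h.2.2
  have hGfin : G.Finite := by
    rw [hGpre]
    exact Set.Finite.preimage Subtype.val_injective.injOn hfinS
  have himg : Subtype.val '' G = S := by
    rw [hGpre]
    rw [Set.image_preimage_eq_iff.mpr]
    intro m hm
    exact ⟨⟨m, hm.1⟩, rfl⟩
  have hTcard : T = G.ncard := by
    rw [hT]
    rw [show Nat.card {m : ℕ // m ∈ Λ ∧ 1 ≤ m ∧ (m : ℝ) ≤ 1 / (2 * σ)} = S.ncard from
      Nat.card_coe_set_eq S]
    rw [← himg, Set.ncard_image_of_injective G Subtype.val_injective]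
  have hGcard : hGfin.toFinset.card = T := by
    rw [hTcard, Set.ncard_eq_toFinset_card G hGfin]
  -- pointwise log comparison
  set ind : ↥Λ → ℝ := fun i => if i ∈ hGfin.toFinset then Real.log q else 0 with hinddef
  have h_ptwise : ∀ i : Λ,
      Real.log ((‖u i‖)⁻¹) ≤ Real.log ((v i)⁻¹) + ind i := by
    intro i
    by_cases hig : i ∈ hGfin.toFinset
    · simp only [hinddef, if_pos hig]
      have hiG : ((i : ℕ) : ℝ) ≤ 1 / (2 * σ) := by
        have := hGfin.mem_toFinset.mp hig
        simpa [hGdef] using this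
      have hkey := key_ineq hσ ht ht' (hm1R i) hiG
      rw [← habs_sq i] at hkey
      have hkey' : K * (v i) ^ 2 ≤ (‖u i‖) ^ 2 := hkey
      have hsqrt : Real.sqrt K * v i ≤ ‖u i‖ := by
        have h1 : Real.sqrt (K * (v i) ^ 2) = Real.sqrt K * v i := by
          rw [Real.sqrt_mul hK0.le, Real.sqrt_sq (hv0 i).le]
        have h2 := Real.sqrt_le_sqrt hkey'
        rwa [h1, Real.sqrt_sq (norm_nonneg _)] at h2
      have hAq : (‖u i‖)⁻¹ ≤ q * (v i)⁻¹ := by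
        rw [hqdef, ← mul_inv]
        exact inv_anti₀ (mul_pos hsqrtK0 (hv0 i)) hsqrt
      calc Real.log ((‖u i‖)⁻¹) ≤ Real.log (q * (v i)⁻¹) :=
            Real.log_le_log (inv_pos.mpr (huabs0 i)) hAq
      _ = Real.log ((v i)⁻¹) + Real.log q := by
          rw [Real.log_mul (ne_of_gt hq0) (ne_of_gt (inv_pos.mpr (hv0 i)))]
          ring
    · simp only [hinddef, if_neg hig, add_zero]
      apply Real.log_le_log (inv_pos.mpr (huabs0 i))
      exact inv_anti₀ (hv0 i) (hvle i)
  have hsum_ind : Summable ind := summable_of_ne_finset_zero (fun i hi => if_neg hi)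
  have htsum_ind : ∑' i : Λ, ind i = (T : ℝ) * Real.log q := by
    rw [tsum_eq_sum (s := hGfin.toFinset) (fun i hi => if_neg hi)]
    rw [Finset.sum_congr rfl (fun i hi => if_pos hi)]
    rw [Finset.sum_const, hGcard, nsmul_eq_mul]
  have hSA_le : ∑' i : Λ, Real.log ((‖u i‖)⁻¹)
      ≤ (∑' i : Λ, Real.log ((v i)⁻¹)) + (T : ℝ) * Real.log q := by
    have h1 := Summable.tsum_le_tsum h_ptwise hlogA (hlogg.add hsum_ind)
    rwa [Summable.tsum_add hlogg hsum_ind, htsum_ind] at h1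
  -- wrap up
  have hqT : q ^ T = K ^ (-(T : ℝ) / 2) := by
    rw [hqdef, inv_pow, Real.sqrt_eq_rpow, neg_div, Real.rpow_neg hK0.le]
    congr 1
    rw [← Real.rpow_natCast (K ^ ((1:ℝ)/2)) T, ← Real.rpow_mul hK0.le]
    congr 1
    ring
  have hFrpos : 0 < Fr σ := by rw [hprodg]; exact Real.exp_pos _
  rw [div_le_iff₀ hFrpos]
  rw [hFabs, hprodA, hprodg]
  calc Real.exp (∑' i : Λ, Real.log ((‖u i‖)⁻¹))
      ≤ Real.exp ((∑' i : Λ, Real.log ((v i)⁻¹)) + (T : ℝ) * Real.log q) :=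
        Real.exp_le_exp.mpr hSA_le
  _ = Real.exp ((T : ℝ) * Real.log q) * Real.exp (∑' i : Λ, Real.log ((v i)⁻¹)) := by
      rw [← Real.exp_add, add_comm]
  _ = K ^ (-(T : ℝ) / 2) * Real.exp (∑' i : Λ, Real.log ((v i)⁻¹)) := by
      rw [show ((T : ℝ) * Real.log q) = ((T : ℕ) : ℝ) * Real.log q from rfl,
        Real.exp_nat_mul, Real.exp_log hq0, hqT]
end
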